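/- arXiv:1112.5515 — 3 statements merged into one kernel-verified Lean document; each statement's English description precedes it below -/
import Mathlib

section
/- For every real N > 0 there exists C_N > 0 with the following property: if A and B are bounded linear operators on ℓ²(ℤ) whose matrix entries a_{ij} = ⟪e_i, A e_j⟫ and b_{ij} = ⟪e_i, B e_j⟫ satisfy ‖A‖_{N+2} := sup_{i,j} |a_{ij}|·(1 + |i − j|)^(N+2) < ∞ and ‖B‖_{N+2} := sup_{i,j} |b_{ij}|·(1 + |i − j|)^(N+2) < ∞, then the matrix entries of the composition A∘B satisfy sup_{i,j} |⟪e_i, (A∘B) e_j⟫|·(1 + |i − j|)^N ≤ C_N·‖A‖_{N+2}·‖B‖_{N+2}. In particular, if A and B both have rapidly decaying matrix entries, then so does A∘B. -/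
/-!
Parseval's identity for the standard Hilbert basis gives `(AB)ᵢⱼ = ∑ₖ aᵢₖ bₖⱼ`. Peetre's inequality
`1 + |i - j| ≤ (1 + |i - k|)(1 + |k - j|)` splits the weight `(1 + |i - j|)^N` between the two
factors, and the two spare powers of decay of `aᵢₖ` make the sum over `k` converge, so
`C_N = ∑ₘ (1 + |m|)^(-2)` works.
-/

noncomputable section

/-- `ℓ²(ℤ)`, the Hilbert space of square-summable complex sequences indexed by `ℤ`. -/
abbrev l2Z : Type := lp (fun _ : ℤ => ℂ) 2

/-- The standard orthonormal basis vector `e n` of `ℓ²(ℤ)`. -/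
def e (n : ℤ) : l2Z := lp.single 2 n 1

/-- The matrix entry `a_{ij} = ⟪e_i, A e_j⟫` of a bounded operator on `ℓ²(ℤ)`. -/
def matrixEntry (A : l2Z →L[ℂ] l2Z) (i j : ℤ) : ℂ := @inner ℂ _ _ (e i) (A (e j))

def stdHilbertBasis : HilbertBasis ℤ ℂ l2Z :=
  HilbertBasis.ofRepr (LinearIsometryEquiv.refl ℂ l2Z)

lemma stdHilbertBasis_apply (n : ℤ) : stdHilbertBasis n = e n := by
  simpa [stdHilbertBasis, e, HilbertBasis.ofRepr] using stdHilbertBasis.repr_self n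

open ContinuousLinearMap in
lemma matrixEntry_comp (A B : l2Z →L[ℂ] l2Z) (i j : ℤ) :
    matrixEntry (A ∘L B) i j = ∑' k, matrixEntry A i k * matrixEntry B k j := by
  calc matrixEntry (A ∘L B) i j = @inner ℂ _ _ (adjoint A (e i)) (B (e j)) :=
        (adjoint_inner_left A _ _).symm
    _ = ∑' k, @inner ℂ _ _ (adjoint A (e i)) (stdHilbertBasis k) *
          @inner ℂ _ _ (stdHilbertBasis k) (B (e j)) :=
        (stdHilbertBasis.tsum_inner_mul_inner _ _).symm
    _ = ∑' k, matrixEntry A i k * matrixEntry B k j := by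
        simp only [stdHilbertBasis_apply, adjoint_inner_left]
        rfl

def japaneseBracket (m : ℤ) : ℝ := 1 + |(m : ℝ)|

lemma one_le_japaneseBracket (m : ℤ) : 1 ≤ japaneseBracket m :=
  le_add_of_nonneg_right (abs_nonneg _)

lemma japaneseBracket_pos (m : ℤ) : 0 < japaneseBracket m :=
  one_pos.trans_le (one_le_japaneseBracket m)

lemma japaneseBracket_add_le_mul (m n : ℤ) :
    japaneseBracket (m + n) ≤ japaneseBracket m * japaneseBracket n := by
  have := abs_add_le (m : ℝ) n
  unfold japaneseBracket
  push_cast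
  nlinarith [abs_nonneg (m : ℝ), abs_nonneg (n : ℝ)]

lemma japaneseBracket_rpow_le_rpow_of_exponent_le {m : ℤ} {s t : ℝ} (hst : s ≤ t) :
    japaneseBracket m ^ s ≤ japaneseBracket m ^ t :=
  Real.rpow_le_rpow_of_exponent_le (one_le_japaneseBracket m) hst

lemma summable_japaneseBracket_rpow_neg {p : ℝ} (hp : 1 < p) :
    Summable fun m : ℤ => japaneseBracket m ^ (-p) := by
  refine (Real.summable_abs_int_rpow hp).of_norm_bounded_eventually ?_
  filter_upwards [Set.Finite.compl_mem_cofinite (Set.finite_singleton (0 : ℤ))] with m hm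
  rw [Real.norm_of_nonneg (Real.rpow_nonneg (japaneseBracket_pos m).le _)]
  exact Real.rpow_le_rpow_of_nonpos (by simpa using hm) (by simp [japaneseBracket]) (by linarith)

lemma norm_mul_mul_japaneseBracket_add_rpow_le {N K L : ℝ} (hN : 0 ≤ N) {a b : ℂ} {m n : ℤ}
    (ha : ‖a‖ * japaneseBracket m ^ (N + 2) ≤ K) (hb : ‖b‖ * japaneseBracket n ^ N ≤ L) :
    ‖a * b‖ * japaneseBracket (m + n) ^ N ≤ K * L * japaneseBracket m ^ (-2 : ℝ) := by
  set wm := japaneseBracket m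
  have hm : 0 < wm := japaneseBracket_pos m
  have hn := japaneseBracket_pos n
  have ha' : ‖a‖ * wm ^ N ≤ K * wm ^ (-2 : ℝ) :=
    calc ‖a‖ * wm ^ N = ‖a‖ * wm ^ (N + 2) * wm ^ (-2 : ℝ) := by
          rw [mul_assoc, ← Real.rpow_add hm]; ring_nf
      _ ≤ K * wm ^ (-2 : ℝ) := by gcongr
  calc ‖a * b‖ * japaneseBracket (m + n) ^ N
      ≤ ‖a‖ * ‖b‖ * (wm ^ N * japaneseBracket n ^ N) := by
        rw [norm_mul, ← Real.mul_rpow hm.le hn.le]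
        exact mul_le_mul_of_nonneg_left
          (Real.rpow_le_rpow (japaneseBracket_pos _).le (japaneseBracket_add_le_mul m n) hN)
          (by positivity)
    _ = (‖a‖ * wm ^ N) * (‖b‖ * japaneseBracket n ^ N) := by ring
    _ ≤ K * wm ^ (-2 : ℝ) * L := by
        gcongr
        exact (mul_nonneg (norm_nonneg _) (by positivity)).trans ha'
    _ = K * L * wm ^ (-2 : ℝ) := by ring

lemma norm_tsum_mul_mul_japaneseBracket_rpow_le {N K L : ℝ} (hN : 0 ≤ N) {a b : ℤ → ℂ}
    {i j : ℤ} (ha : ∀ k, ‖a k‖ * japaneseBracket (i - k) ^ (N + 2) ≤ K)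
    (hb : ∀ k, ‖b k‖ * japaneseBracket (k - j) ^ N ≤ L) :
    ‖∑' k, a k * b k‖ * japaneseBracket (i - j) ^ N ≤
      (∑' m : ℤ, japaneseBracket m ^ (-2 : ℝ)) * K * L := by
  set w := japaneseBracket (i - j) ^ N
  have hw : 0 < w := Real.rpow_pos_of_pos (japaneseBracket_pos _) N
  have hterm (k : ℤ) : ‖a k * b k‖ * w ≤ K * L * japaneseBracket (i - k) ^ (-2 : ℝ) := by
    simpa using norm_mul_mul_japaneseBracket_add_rpow_le hN (ha k) (hb k)
  have hdom : Summable fun k => K * L * japaneseBracket (i - k) ^ (-2 : ℝ) :=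
    ((summable_japaneseBracket_rpow_neg one_lt_two).comp_injective
      (Equiv.subLeft i).injective).mul_left _
  have hsum : Summable fun k => ‖a k * b k‖ * w :=
    hdom.of_nonneg_of_le (fun k => by positivity) hterm
  calc ‖∑' k, a k * b k‖ * w
      ≤ (∑' k, ‖a k * b k‖) * w := by
        gcongr
        exact norm_tsum_le_tsum_norm ((summable_mul_right_iff hw.ne').mp hsum)
    _ = ∑' k, ‖a k * b k‖ * w := tsum_mul_right.symm
    _ ≤ ∑' k, K * L * japaneseBracket (i - k) ^ (-2 : ℝ) := hsum.tsum_le_tsum hterm hdom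
    _ = (∑' m : ℤ, japaneseBracket m ^ (-2 : ℝ)) * K * L := by
        rw [tsum_mul_left, ← (Equiv.subLeft i).tsum_eq fun m => japaneseBracket m ^ (-2 : ℝ)]
        simp only [Equiv.subLeft_apply]
        ring

/-- for every `N > 0` there is `C_N > 0` such that whenever the matrix
entries of `A` and `B` satisfy `|a_{ij}| (1+|i-j|)^{N+2} ≤ K_A` and
`|b_{ij}| (1+|i-j|)^{N+2} ≤ K_B`, the matrix entries of the composition satisfy
`|(A∘B)_{ij}| (1+|i-j|)^N ≤ C_N K_A K_B`. -/
theorem composition_of_rapidly_decaying_matrices :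
    ∀ N : ℝ, 0 < N → ∃ C : ℝ, 0 < C ∧
      ∀ (A B : l2Z →L[ℂ] l2Z) (KA KB : ℝ),
        (∀ i j : ℤ, ‖matrixEntry A i j‖ * (1 + |((i - j : ℤ) : ℝ)|) ^ (N + 2) ≤ KA) →
        (∀ i j : ℤ, ‖matrixEntry B i j‖ * (1 + |((i - j : ℤ) : ℝ)|) ^ (N + 2) ≤ KB) →
        ∀ i j : ℤ, ‖matrixEntry (A ∘L B) i j‖ * (1 + |((i - j : ℤ) : ℝ)|) ^ N ≤
          C * KA * KB := by
  intro N hN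
  have hpos (m : ℤ) : 0 < japaneseBracket m ^ (-2 : ℝ) :=
    Real.rpow_pos_of_pos (japaneseBracket_pos m) _
  refine ⟨∑' m : ℤ, japaneseBracket m ^ (-2 : ℝ),
    (summable_japaneseBracket_rpow_neg one_lt_two).tsum_pos (fun m => (hpos m).le) 0 (hpos 0), ?_⟩
  intro A B KA KB hA hB i j
  have hB' (k : ℤ) : ‖matrixEntry B k j‖ * japaneseBracket (k - j) ^ N ≤ KB :=
    (mul_le_mul_of_nonneg_left (japaneseBracket_rpow_le_rpow_of_exponent_le (by linarith))
      (norm_nonneg _)).trans (hB k j)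
  rw [matrixEntry_comp]
  exact norm_tsum_mul_mul_japaneseBracket_rpow_le hN.le (fun k => hA i k) hB'
end
end

section
/- Let A be a bounded linear operator on ℓ²(ℤ) with rapidly decaying matrix entries. If A is invertible in the algebra of bounded linear operators on ℓ²(ℤ), then the inverse A⁻¹ also has rapidly decaying matrix entries. -/
noncomputable section

/-- `A` has rapidly decaying matrix entries: for every `N > 0` there is `C_N > 0` with
`|a_{ij}| ≤ C_N (1+|i-j|)^{-N}` for all `i, j`. -/
def RapidDecay (A : l2Z →L[ℂ] l2Z) : Prop :=
  ∀ N : ℝ, 0 < N → ∃ C : ℝ, 0 < C ∧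
    ∀ i j : ℤ, ‖matrixEntry A i j‖ ≤ C * (1 + |((i - j : ℤ) : ℝ)|) ^ (-N)

/-!
Write `c_n(i)` for the position `i` truncated to `[-n, n]` and `D_n` for the diagonal operator
with entries `c_n`. The matrix of the iterated commutator `ad_{D_n}^k X` has entries
`(c_n(i) - c_n(j))^k x_{ij}`, which are `(i - j)^k x_{ij}` once `|i|, |j| ≤ n`. Since `c_n` is
`1`-Lipschitz, Schur's test turns the rapid decay of `A` into bounds on `‖ad_{D_n}^k A‖` that are
uniform in `n`; conversely, such uniform bounds for `B` give its rapid decay.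

Uniform boundedness in `n` is membership of the family `(X)_n` in the subring `ℓ^∞` of families of
operators. For any ring, subring `S` and element `d`, the elements whose iterated commutators with
`d` stay in `S` form a subring by the Leibniz rule, and this subring contains every `b ∈ S` inverse
to one of its elements `a`, because `ad_d b = -b (ad_d a) b` lets one climb the order by induction.
-/

open scoped ENNReal InnerProductSpace

section InnerDerivation

open Finset HasAntidiagonal

variable {R : Type*} [Ring R]

def ad (d : R) : R →+ R := AddMonoidHom.mulLeft d - AddMonoidHom.mulRight d

theorem ad_apply (d x : R) : ad d x = d * x - x * d := rfl

theorem ad_mul (d x y : R) : ad d (x * y) = ad d x * y + x * ad d y := by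
  simp only [ad_apply]; noncomm_ring

theorem ad_one (d : R) : ad d 1 = 0 := by simp [ad_apply]

theorem iterate_ad_mul (d x y : R) (n : ℕ) :
    (ad d)^[n] (x * y) =
      ∑ ij ∈ antidiagonal n, n.choose ij.1 • ((ad d)^[ij.1] x * (ad d)^[ij.2] y) := by
  induction n with
  | zero => simp
  | succ n ih =>
    rw [sum_antidiagonal_choose_succ_nsmul (fun i j ↦ (ad d)^[i] x * (ad d)^[j] y) n]
    simp only [Function.iterate_succ_apply', ih, map_sum, map_nsmul, ad_mul, nsmul_add,
      sum_add_distrib]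
    rw [add_comm, add_left_cancel_iff]
    refine sum_congr rfl fun ij hij => ?_
    rw [Nat.choose_symm_of_eq_add (mem_antidiagonal.1 hij).symm]

theorem ad_eq_neg_mul_ad_mul {d a b : R} (hab : a * b = 1) (hba : b * a = 1) :
    ad d b = -(b * ad d a * b) := by
  have : b * ad d a * b = b * d * (a * b) - (b * a) * (d * b) := by
    simp only [ad_apply]; noncomm_ring
  rw [this, hab, hba, ad_apply]; noncomm_ring

theorem RingHom.map_iterate_ad {R' : Type*} [Ring R'] (f : R →+* R') (d x : R) (k : ℕ) :
    f ((ad d)^[k] x) = (ad (f d))^[k] (f x) := by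
  induction k with
  | zero => rfl
  | succ k ih => simp only [Function.iterate_succ_apply', ad_apply, map_sub, map_mul, ih]

namespace Subring

variable (S : Subring R) (d : R)

def adSmooth (k : ℕ) : Subring R where
  carrier := {x | ∀ j ≤ k, (ad d)^[j] x ∈ S}
  mul_mem' {x y} hx hy j hj := by
    rw [iterate_ad_mul]
    refine sum_mem fun ij hij => nsmul_mem (mul_mem (hx _ ?_) (hy _ ?_)) _ <;>
      linarith [mem_antidiagonal.1 hij]
  one_mem' := by
    rintro (_ | j) -
    · exact S.one_mem
    · rw [Function.iterate_succ_apply, ad_one, iterate_map_zero]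
      exact S.zero_mem
  add_mem' hx hy j hj := by rw [iterate_map_add]; exact add_mem (hx j hj) (hy j hj)
  zero_mem' j _ := by rw [iterate_map_zero]; exact S.zero_mem
  neg_mem' hx j hj := by rw [iterate_map_neg]; exact neg_mem (hx j hj)

variable {S d}

theorem ad_mem_adSmooth {x : R} {k : ℕ} (hx : x ∈ S.adSmooth d (k + 1)) :
    ad d x ∈ S.adSmooth d k := fun j hj => by
  rw [← Function.iterate_succ_apply]; exact hx (j + 1) (by omega)

theorem mem_adSmooth_of_mul_eq_one {a b : R} (ha : ∀ k, a ∈ S.adSmooth d k) (hb : b ∈ S)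
    (hab : a * b = 1) (hba : b * a = 1) (k : ℕ) : b ∈ S.adSmooth d k := by
  induction k with
  | zero => intro j hj; rwa [Nat.le_zero.1 hj]
  | succ k ih =>
    rintro (_ | j) hj
    · exact hb
    · have had : ad d b ∈ S.adSmooth d k := by
        rw [ad_eq_neg_mul_ad_mul hab hba]
        exact neg_mem (mul_mem (mul_mem ih (ad_mem_adSmooth (ha _))) ih)
      rw [Function.iterate_succ_apply]
      exact had j (by omega)

end Subring

end InnerDerivation

theorem mem_adSmooth_lpInftySubring_iff {ι R : Type*} [NormedRing R] [NormOneClass R]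
    (d x : ι → R) (k : ℕ) :
    (x : PreLp fun _ : ι => R) ∈ (lpInftySubring fun _ : ι => R).adSmooth d k ↔
      ∀ j ≤ k, BddAbove (Set.range fun i => ‖(ad (d i))^[j] (x i)‖) := by
  refine forall₂_congr fun j _ => ?_
  have h (i : ι) : ((ad (d : PreLp fun _ : ι => R))^[j] x) i = (ad (d i))^[j] (x i) :=
    (Pi.evalRingHom (fun _ => R) i).map_iterate_ad d x j
  simp_rw [← h]
  exact memℓp_infty_iff

namespace lp

variable {α 𝕜 : Type*} [NormedField 𝕜] {p : ℝ≥0∞}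

theorem memℓp_infty_mul (c : lp (fun _ : α => 𝕜) ∞) (x : lp (fun _ : α => 𝕜) p) :
    Memℓp (fun i => c i * x i) p :=
  ((lp.memℓp x).norm.const_mul ‖c‖).mono fun i => by
    rw [norm_mul]
    exact mul_le_mul_of_nonneg_right (norm_apply_le_norm ENNReal.top_ne_zero c i) (norm_nonneg _)

variable [Fact (1 ≤ p)]

def diagonal (c : lp (fun _ : α => 𝕜) ∞) :
    lp (fun _ : α => 𝕜) p →L[𝕜] lp (fun _ : α => 𝕜) p :=
  LinearMap.mkContinuous
    { toFun x := ⟨fun i => c i * x i, memℓp_infty_mul c x⟩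
      map_add' x y := lp.ext <| funext fun i => mul_add (c i) (x i) (y i)
      map_smul' a x := lp.ext <| funext fun i => mul_left_comm (c i) a (x i) }
    ‖c‖ fun x => by
      have hp : p ≠ 0 := (zero_lt_one.trans_le Fact.out).ne'
      calc ‖(⟨fun i => c i * x i, memℓp_infty_mul c x⟩ : lp (fun _ : α => 𝕜) p)‖
          ≤ ‖‖c‖ • toNorm x‖ := norm_mono hp fun i => by
            rw [norm_mul]
            simpa [toNorm] using mul_le_mul_of_nonneg_right
              (norm_apply_le_norm ENNReal.top_ne_zero c i) (norm_nonneg (x i))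
        _ = ‖c‖ * ‖x‖ := by rw [norm_const_smul hp, norm_toNorm, norm_norm]

theorem diagonal_apply (c : lp (fun _ : α => 𝕜) ∞) (x : lp (fun _ : α => 𝕜) p) (i : α) :
    diagonal c x i = c i * x i := rfl

theorem tsum_enorm_sq {E : α → Type*} [∀ i, NormedAddCommGroup (E i)] (x : lp E 2) :
    ∑' i, ‖x i‖ₑ ^ 2 = ‖x‖ₑ ^ 2 := by
  have h := lp.norm_rpow_eq_tsum (p := 2) (by norm_num) x
  have hsum := (lp.memℓp x).summable (p := 2) (by norm_num)
  simp only [ENNReal.toReal_ofNat, Real.rpow_two] at h hsum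
  rw [← ofReal_norm, ← ENNReal.ofReal_pow (norm_nonneg _), h,
    ENNReal.ofReal_tsum_of_nonneg (fun i => by positivity) hsum]
  simp [ENNReal.ofReal_pow]

end lp

theorem ENNReal.mul_le_add_sq_div_two (a b : ℝ≥0∞) : a * b ≤ (a ^ 2 + b ^ 2) / 2 := by
  simpa [ENNReal.add_div] using ENNReal.young_inequality a b Real.HolderConjugate.two_two

theorem ENNReal.tsum_tsum_mul_le {ι : Type*} [AddGroup ι] (w f g : ι → ℝ≥0∞) :
    ∑' t, ∑' s, g s * w (s - t) * f t ≤
      (∑' d, w d) * ((∑' s, g s ^ 2 + ∑' t, f t ^ 2) / 2) := by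
  have hrow (s : ι) : ∑' t, w (s - t) = ∑' d, w d := (Equiv.subLeft s).tsum_eq w
  have hcol (t : ι) : ∑' s, w (s - t) = ∑' d, w d := (Equiv.subRight t).tsum_eq w
  calc ∑' t, ∑' s, g s * w (s - t) * f t
      ≤ ∑' t, ∑' s, (w (s - t) * g s ^ 2 + w (s - t) * f t ^ 2) / 2 := by
        refine ENNReal.tsum_le_tsum fun t => ENNReal.tsum_le_tsum fun s => ?_
        rw [mul_right_comm, mul_comm, ← mul_add, mul_div_assoc]
        exact mul_le_mul_right (mul_le_add_sq_div_two _ _) _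
    _ = (∑' s, ∑' t, w (s - t) * g s ^ 2 + ∑' t, ∑' s, w (s - t) * f t ^ 2) / 2 := by
        simp_rw [div_eq_mul_inv, ENNReal.tsum_mul_right, ENNReal.tsum_add]
        rw [ENNReal.tsum_comm (f := fun t s => w (s - t) * g s ^ 2)]
        simp_rw [ENNReal.tsum_mul_right]
    _ = (∑' d, w d) * ((∑' s, g s ^ 2 + ∑' t, f t ^ 2) / 2) := by
        simp_rw [ENNReal.tsum_mul_right, hrow, hcol, ENNReal.tsum_mul_left, ← mul_add,
          mul_div_assoc]

theorem matrixEntry_eq_apply (T : l2Z →L[ℂ] l2Z) (i j : ℤ) : matrixEntry T i j = T (e j) i := by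
  simp [matrixEntry, e, lp.inner_single_left]

theorem norm_e (n : ℤ) : ‖e n‖ = 1 := by
  simp [e, lp.norm_single]

/-- Makes `l2Z →L[ℂ] l2Z` a `NormOneClass`, as `lpInftySubring` requires. -/
instance : Nontrivial l2Z := ⟨e 0, 0, fun h => by simpa [h] using norm_e 0⟩

theorem norm_matrixEntry_le (T : l2Z →L[ℂ] l2Z) (i j : ℤ) : ‖matrixEntry T i j‖ ≤ ‖T‖ := by
  rw [matrixEntry_eq_apply]
  exact (lp.norm_apply_le_norm two_ne_zero _ i).trans
    ((T.le_opNorm_of_le (norm_e j).le).trans_eq (mul_one _))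

theorem hasSum_smul_e (x : l2Z) : HasSum (fun t => x t • e t) x := by
  simpa [e, ← lp.single_smul] using lp.hasSum_single ENNReal.ofNat_ne_top x

theorem enorm_inner_le_tsum_matrixEntry (T : l2Z →L[ℂ] l2Z) (x y : l2Z) :
    ‖⟪y, T x⟫_ℂ‖ₑ ≤ ∑' t, ∑' s, ‖y s‖ₑ * ‖matrixEntry T s t‖ₑ * ‖x t‖ₑ := by
  have hexp := (((innerSL ℂ y).comp T).hasSum (hasSum_smul_e x)).tsum_eq
  simp only [ContinuousLinearMap.comp_apply, map_smul, innerSL_apply_apply, smul_eq_mul] at hexp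
  rw [← hexp]
  refine enorm_tsum_le_tsum_enorm.trans (ENNReal.tsum_le_tsum fun t => ?_)
  rw [enorm_mul, mul_comm, ENNReal.tsum_mul_right, lp.inner_eq_tsum]
  gcongr
  refine enorm_tsum_le_tsum_enorm.trans (ENNReal.tsum_le_tsum fun s => ?_)
  simp [matrixEntry_eq_apply, mul_comm]

theorem opNorm_le_tsum_of_norm_matrixEntry_le (T : l2Z →L[ℂ] l2Z) {w : ℤ → ℝ}
    (hw : Summable w) (hT : ∀ i j, ‖matrixEntry T i j‖ ≤ w (i - j)) : ‖T‖ ≤ ∑' d, w d := by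
  have hw0 (d : ℤ) : 0 ≤ w d := (norm_nonneg _).trans (by simpa using hT d 0)
  refine T.opNorm_le_of_re_inner_le (tsum_nonneg hw0) fun x y hx hy => ?_
  refine (RCLike.re_le_norm _).trans ?_
  rw [← inner_conj_symm, RCLike.norm_conj, ← ENNReal.ofReal_le_ofReal_iff (tsum_nonneg hw0),
    ofReal_norm, ENNReal.ofReal_tsum_of_nonneg hw0 hw]
  calc ‖⟪y, T x⟫_ℂ‖ₑ ≤ ∑' t, ∑' s, ‖y s‖ₑ * ‖matrixEntry T s t‖ₑ * ‖x t‖ₑ :=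
        enorm_inner_le_tsum_matrixEntry T x y
    _ ≤ ∑' t, ∑' s, ‖y s‖ₑ * ENNReal.ofReal (w (s - t)) * ‖x t‖ₑ := by
        gcongr with t s
        rw [← ofReal_norm]
        exact ENNReal.ofReal_le_ofReal (hT s t)
    _ ≤ (∑' d, ENNReal.ofReal (w d)) * ((∑' s, ‖y s‖ₑ ^ 2 + ∑' t, ‖x t‖ₑ ^ 2) / 2) :=
        ENNReal.tsum_tsum_mul_le _ _ _
    _ = ∑' d, ENNReal.ofReal (w d) := by
        rw [lp.tsum_enorm_sq, lp.tsum_enorm_sq, ← ofReal_norm, ← ofReal_norm, hx, hy,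
          ENNReal.ofReal_one, one_pow, one_add_one_eq_two,
          ENNReal.div_self two_ne_zero ENNReal.ofNat_ne_top, mul_one]

theorem lp.diagonal_e (c : lp (fun _ : ℤ => ℂ) ∞) (j : ℤ) : lp.diagonal c (e j) = c j • e j := by
  ext k
  rw [lp.diagonal_apply, lp.coeFn_smul, Pi.smul_apply, smul_eq_mul]
  rcases eq_or_ne k j with rfl | hkj
  · rfl
  · simp [e, lp.single_apply, Pi.single_eq_of_ne hkj]

theorem matrixEntry_ad_diagonal (c : lp (fun _ : ℤ => ℂ) ∞) (X : l2Z →L[ℂ] l2Z) (i j : ℤ) :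
    matrixEntry (ad (lp.diagonal c) X) i j = (c i - c j) * matrixEntry X i j := by
  simp only [matrixEntry_eq_apply, ad_apply, sub_apply, mul_apply_eq_comp, lp.diagonal_e,
    map_smul, lp.coeFn_sub, Pi.sub_apply, lp.diagonal_apply, lp.coeFn_smul, Pi.smul_apply,
    smul_eq_mul]
  ring

theorem matrixEntry_iterate_ad_diagonal (c : lp (fun _ : ℤ => ℂ) ∞) (X : l2Z →L[ℂ] l2Z)
    (k : ℕ) (i j : ℤ) :
    matrixEntry ((ad (lp.diagonal c))^[k] X) i j = (c i - c j) ^ k * matrixEntry X i j := by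
  induction k with
  | zero => simp
  | succ k ih => rw [Function.iterate_succ_apply', matrixEntry_ad_diagonal, ih]; ring

def positionCutoff (n : ℕ) : lp (fun _ : ℤ => ℂ) ∞ :=
  ⟨fun i => (Set.projIcc (-n : ℤ) n (by omega) i : ℤ), memℓp_infty ⟨n, by
    rintro _ ⟨i, rfl⟩
    dsimp only
    rw [Complex.norm_intCast, ← Int.cast_abs, ← Int.cast_natCast (R := ℝ), Int.cast_le]
    exact abs_le.2 (Set.projIcc (-n : ℤ) n _ i).2⟩⟩

theorem norm_positionCutoff_sub_le (n : ℕ) (i j : ℤ) :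
    ‖positionCutoff n i - positionCutoff n j‖ ≤ |((i - j : ℤ) : ℝ)| := by
  rw [positionCutoff, ← Int.cast_sub, Complex.norm_intCast, ← Int.cast_abs, ← Int.cast_abs,
    Int.cast_le]
  exact Set.abs_projIcc_sub_projIcc _

theorem positionCutoff_sub_of_abs_le {n : ℕ} {i j : ℤ} (hi : |i| ≤ n) (hj : |j| ≤ n) :
    positionCutoff n i - positionCutoff n j = ((i - j : ℤ) : ℂ) := by
  simp [positionCutoff, Set.projIcc_of_mem _ (abs_le.1 hi), Set.projIcc_of_mem _ (abs_le.1 hj)]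

theorem summable_one_add_abs_rpow_neg {s : ℝ} (hs : 1 < s) :
    Summable fun d : ℤ => (1 + |(d : ℝ)|) ^ (-s) := by
  refine (Real.summable_abs_int_rpow hs).of_norm_bounded_eventually ?_
  filter_upwards [(Set.finite_singleton (0 : ℤ)).compl_mem_cofinite] with d hd
  rw [Real.norm_of_nonneg (by positivity)]
  exact Real.rpow_le_rpow_of_nonpos (by simpa using hd) (by linarith) (by linarith)

theorem pow_mul_one_add_rpow_neg_le {t : ℝ} (ht : 0 ≤ t) (k : ℕ) (s : ℝ) :
    t ^ k * (1 + t) ^ (-(k + s)) ≤ (1 + t) ^ (-s) := by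
  have h1t : 0 < 1 + t := by linarith
  rw [neg_add, Real.rpow_add h1t, Real.rpow_neg h1t.le, Real.rpow_natCast, ← mul_assoc,
    ← div_eq_mul_inv]
  exact mul_le_of_le_one_left (by positivity)
    ((div_le_one (by positivity)).2 (pow_le_pow_left₀ ht (by linarith) k))

theorem bddAbove_norm_iterate_ad_positionCutoff {A : l2Z →L[ℂ] l2Z} (hA : RapidDecay A)
    (k : ℕ) : BddAbove (Set.range fun n => ‖(ad (lp.diagonal (positionCutoff n)))^[k] A‖) := by
  obtain ⟨C, hC0, hC⟩ := hA (k + 2) (by positivity)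
  refine ⟨∑' d : ℤ, C * (1 + |(d : ℝ)|) ^ (-2 : ℝ), ?_⟩
  rintro _ ⟨n, rfl⟩
  refine opNorm_le_tsum_of_norm_matrixEntry_le _
    ((summable_one_add_abs_rpow_neg one_lt_two).mul_left C) fun i j => ?_
  rw [matrixEntry_iterate_ad_diagonal, norm_mul, norm_pow]
  calc ‖positionCutoff n i - positionCutoff n j‖ ^ k * ‖matrixEntry A i j‖
      ≤ |((i - j : ℤ) : ℝ)| ^ k * (C * (1 + |((i - j : ℤ) : ℝ)|) ^ (-((k : ℝ) + 2))) :=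
        mul_le_mul (pow_le_pow_left₀ (norm_nonneg _) (norm_positionCutoff_sub_le n i j) k)
          (hC i j) (norm_nonneg _) (by positivity)
    _ ≤ C * (1 + |((i - j : ℤ) : ℝ)|) ^ (-2 : ℝ) := by
        rw [mul_left_comm]
        exact mul_le_mul_of_nonneg_left (pow_mul_one_add_rpow_neg_le (abs_nonneg _) k 2) hC0.le

theorem pow_mul_norm_matrixEntry_le_of_norm_iterate_ad_le {B : l2Z →L[ℂ] l2Z} {M : ℝ} {k : ℕ}
    (hM : ∀ n, ‖(ad (lp.diagonal (positionCutoff n)))^[k] B‖ ≤ M) (i j : ℤ) :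
    |((i - j : ℤ) : ℝ)| ^ k * ‖matrixEntry B i j‖ ≤ M := by
  have hi : |i| ≤ (max |i| |j|).toNat := (le_max_left _ _).trans (Int.self_le_toNat _)
  have hj : |j| ≤ (max |i| |j|).toNat := (le_max_right _ _).trans (Int.self_le_toNat _)
  have := (norm_matrixEntry_le _ i j).trans (hM (max |i| |j|).toNat)
  rwa [matrixEntry_iterate_ad_diagonal, positionCutoff_sub_of_abs_le hi hj, norm_mul, norm_pow,
    Complex.norm_intCast] at this

theorem rapidDecay_of_pow_mul_le {B : l2Z →L[ℂ] l2Z}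
    (h : ∀ k : ℕ, ∃ M, ∀ i j : ℤ, |((i - j : ℤ) : ℝ)| ^ k * ‖matrixEntry B i j‖ ≤ M) :
    RapidDecay B := by
  intro N _
  set k := ⌈N⌉₊
  obtain ⟨M₀, hM₀⟩ := h 0
  obtain ⟨M, hM⟩ := h k
  refine ⟨max (2 ^ (k - 1) * (M₀ + M)) 1, lt_max_of_lt_right one_pos, fun i j => ?_⟩
  set t := |((i - j : ℤ) : ℝ)|
  have ht : 0 ≤ t := abs_nonneg _
  have h1t : 1 ≤ 1 + t := by linarith
  rw [Real.rpow_neg (by linarith), ← div_eq_mul_inv, le_div_iff₀ (by positivity)]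
  calc ‖matrixEntry B i j‖ * (1 + t) ^ N ≤ ‖matrixEntry B i j‖ * (1 + t) ^ k := by
        rw [← Real.rpow_natCast]
        exact mul_le_mul_of_nonneg_left (Real.rpow_le_rpow_of_exponent_le h1t (Nat.le_ceil N))
          (norm_nonneg _)
    _ ≤ ‖matrixEntry B i j‖ * (2 ^ (k - 1) * (1 ^ k + t ^ k)) :=
        mul_le_mul_of_nonneg_left (add_pow_le zero_le_one ht k) (norm_nonneg _)
    _ = 2 ^ (k - 1) * (t ^ 0 * ‖matrixEntry B i j‖ + t ^ k * ‖matrixEntry B i j‖) := by ring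
    _ ≤ 2 ^ (k - 1) * (M₀ + M) := by gcongr; exacts [hM₀ i j, hM i j]
    _ ≤ max (2 ^ (k - 1) * (M₀ + M)) 1 := le_max_left _ _

theorem rapidDecay_of_bddAbove_norm_iterate_ad {B : l2Z →L[ℂ] l2Z}
    (h : ∀ k, BddAbove (Set.range fun n => ‖(ad (lp.diagonal (positionCutoff n)))^[k] B‖)) :
    RapidDecay B :=
  rapidDecay_of_pow_mul_le fun k =>
    let ⟨M, hM⟩ := h k
    ⟨M, pow_mul_norm_matrixEntry_le_of_norm_iterate_ad_le fun n => hM ⟨n, rfl⟩⟩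

/-- if a bounded operator `A` on `ℓ²(ℤ)` has rapidly decaying matrix
entries and is invertible in the algebra of bounded operators, then its inverse also
has rapidly decaying matrix entries (spectral invariance of the algebra `𝒮`). -/
theorem inverse_has_rapidly_decaying_entries
    (A B : l2Z →L[ℂ] l2Z) (hA : RapidDecay A)
    (hAB : A ∘L B = 1) (hBA : B ∘L A = 1) :
    RapidDecay B := by
  let D : ℕ → l2Z →L[ℂ] l2Z := fun n => lp.diagonal (positionCutoff n)
  have hB : ∀ k, (fun _ => B : PreLp fun _ : ℕ => l2Z →L[ℂ] l2Z) ∈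
      (lpInftySubring fun _ : ℕ => l2Z →L[ℂ] l2Z).adSmooth D k :=
    Subring.mem_adSmooth_of_mul_eq_one
      (fun k => (mem_adSmooth_lpInftySubring_iff D _ k).2 fun j _ =>
        bddAbove_norm_iterate_ad_positionCutoff hA j)
      (memℓp_infty ⟨‖B‖, Set.forall_mem_range.2 fun _ => le_rfl⟩)
      (funext fun _ => hAB) (funext fun _ => hBA)
  exact rapidDecay_of_bddAbove_norm_iterate_ad fun k =>
    (mem_adSmooth_lpInftySubring_iff D _ k).1 (hB k) k le_rfl
end
end

section
/- Let A be a bounded linear operator on ℓ²(ℤ) with rapidly decaying matrix entries. Then for every s ∈ ℝ there exists a constant C_s > 0 such that for all real R ≥ 1 and all u ∈ ℓ²(ℤ) with ∑_{n∈ℤ} |u(n)|²·(n² + R²)^s < ∞, one has ∑_{n∈ℤ} |(A u)(n)|²·(n² + R²)^s ≤ C_s·∑_{n∈ℤ} |u(n)|²·(n² + R²)^s. That is, A is bounded on each weighted space ℓ²(ℤ, μ_{s,R}) with operator norm bounded uniformly in R ≥ 1 (A is an 'operator family of order 0' in the sense of the paper). -/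
noncomputable section

/-! Schur test with the weight `w(n) = (n² + R²)^s`. Peetre's inequality
`w(i) ≤ (1 + |i - j|)^(2|s|) w(j)`, valid for all `R ≥ 1` at once, lets the decay
`|a_{ij}| ≤ B (1 + |i - j|)^(-2|s|-2)` absorb the weight, so both `∑_j |a_{ij}|` and
`∑_i |a_{ij}| w(i) / w(j)` are at most a constant times `∑_k (1 + |k|)^(-2)`, independently
of `R`; by Cauchy–Schwarz this bounds `A` on `ℓ²(ℤ, w)`. -/

open scoped ENNReal ComplexConjugate

section Schur

variable {ι : Type*}

theorem ENNReal.tsum_mul_sq_le (w f : ι → ℝ≥0∞) :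
    (∑' i, w i * f i) ^ 2 ≤ (∑' i, w i) * ∑' i, w i * f i ^ 2 := by
  have holder : ∑' i, w i * f i ≤
      (∑' i, w i) ^ (2⁻¹ : ℝ) * (∑' i, w i * f i ^ 2) ^ (2⁻¹ : ℝ) :=
    ENNReal.summable.tsum_le_of_sum_le fun s => by
      have := ENNReal.inner_le_weight_mul_Lp_of_nonneg s one_le_two w f
      rw [show (1 : ℝ) - 2⁻¹ = 2⁻¹ by norm_num] at this
      simp only [ENNReal.rpow_two] at this
      refine this.trans ?_
      gcongr <;> exact ENNReal.sum_le_tsum s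
  calc (∑' i, w i * f i) ^ 2
      ≤ ((∑' i, w i) ^ (2⁻¹ : ℝ) * (∑' i, w i * f i ^ 2) ^ (2⁻¹ : ℝ)) ^ 2 :=
        pow_le_pow_left₀ zero_le holder 2
    _ = (∑' i, w i) * ∑' i, w i * f i ^ 2 := by
      rw [mul_pow, ← ENNReal.rpow_mul_natCast, ← ENNReal.rpow_mul_natCast]
      norm_num

theorem ENNReal.schur_test (K : ι → ι → ℝ≥0∞) (W x : ι → ℝ≥0∞) {α β : ℝ≥0∞}
    (hrow : ∀ i, ∑' j, K i j ≤ α) (hcol : ∀ j, ∑' i, K i j * W i ≤ β * W j) :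
    ∑' i, (∑' j, K i j * x j) ^ 2 * W i ≤ α * β * ∑' j, x j ^ 2 * W j :=
  calc ∑' i, (∑' j, K i j * x j) ^ 2 * W i
      ≤ ∑' i, α * (∑' j, K i j * x j ^ 2) * W i := by
        gcongr with i
        exact (tsum_mul_sq_le _ _).trans (by gcongr; exact hrow i)
    _ = α * ∑' j, x j ^ 2 * ∑' i, K i j * W i := by
        simp_rw [mul_assoc, ENNReal.tsum_mul_left, ← ENNReal.tsum_mul_right,
          ← ENNReal.tsum_mul_left]
        rw [ENNReal.tsum_comm]
        exact tsum_congr fun j => tsum_congr fun i => by ring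
    _ ≤ α * ∑' j, x j ^ 2 * (β * W j) := by gcongr with j; exact hcol j
    _ = α * β * ∑' j, x j ^ 2 * W j := by
        rw [← ENNReal.tsum_mul_left, ← ENNReal.tsum_mul_left]
        exact tsum_congr fun j => by ring

theorem summable_and_tsum_le_of_tsum_ofReal_le {f g : ι → ℝ} (hf : ∀ i, 0 ≤ f i)
    (hg : ∀ i, 0 ≤ g i) (hgs : Summable g) {C : ℝ} (hC : 0 ≤ C)
    (h : ∑' i, ENNReal.ofReal (f i) ≤ ENNReal.ofReal C * ∑' i, ENNReal.ofReal (g i)) :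
    Summable f ∧ ∑' i, f i ≤ C * ∑' i, g i := by
  rw [← ENNReal.ofReal_tsum_of_nonneg hg hgs, ← ENNReal.ofReal_mul hC] at h
  have hfs : Summable f := by
    simpa [ENNReal.toReal_ofReal (hf _)] using
      ENNReal.summable_toReal (ne_top_of_le_ne_top ENNReal.ofReal_ne_top h)
  refine ⟨hfs, ?_⟩
  rwa [← ENNReal.ofReal_tsum_of_nonneg hf hfs,
    ENNReal.ofReal_le_ofReal_iff (mul_nonneg hC (tsum_nonneg hg))] at h

end Schur

section Toeplitz

variable {G : Type*} [AddGroup G] {K : G → G → ℝ≥0∞} (φ : G → ℝ≥0∞)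

theorem ENNReal.tsum_le_tsum_of_le_sub (hK : ∀ i j, K i j ≤ φ (i - j)) (i : G) :
    ∑' j, K i j ≤ ∑' k, φ k :=
  (ENNReal.tsum_le_tsum (hK i)).trans_eq ((Equiv.subLeft i).tsum_eq φ)

theorem ENNReal.tsum_mul_le_tsum_mul_of_mul_le_sub {W : G → ℝ≥0∞}
    (hK : ∀ i j, K i j * W i ≤ φ (i - j) * W j) (j : G) :
    ∑' i, K i j * W i ≤ (∑' k, φ k) * W j :=
  calc ∑' i, K i j * W i ≤ ∑' i, φ (i - j) * W j := ENNReal.tsum_le_tsum (hK · j)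
    _ = (∑' k, φ k) * W j := by rw [ENNReal.tsum_mul_right, ← (Equiv.subRight j).tsum_eq φ]; rfl

end Toeplitz

theorem sq_add_le_one_add_abs_sub_sq_mul {c : ℝ} (hc : 1 ≤ c) (x y : ℝ) :
    x ^ 2 + c ≤ (1 + |x - y|) ^ 2 * (y ^ 2 + c) := by
  have hd : 0 ≤ |x - y| := abs_nonneg _
  have hxy : |x - y| ^ 2 = (x - y) ^ 2 := sq_abs _
  have hy : 2 * y * (x - y) ≤ 2 * |y| * |x - y| := by
    rw [mul_assoc, mul_assoc, ← abs_mul]; gcongr; exact le_abs_self _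
  -- with `d = |x - y|`, the cross term `2y(x - y)` is absorbed by `d (|y| - 1)² ≥ 0`
  nlinarith [mul_nonneg hd (sq_nonneg (|y| - 1)), sq_abs y,
    mul_nonneg (mul_nonneg hd hd) (sq_nonneg y)]

theorem sq_add_rpow_le_one_add_abs_sub_rpow_mul {c : ℝ} (hc : 1 ≤ c) (s x y : ℝ) :
    (x ^ 2 + c) ^ s ≤ (1 + |x - y|) ^ (2 * |s|) * (y ^ 2 + c) ^ s := by
  have hx : 0 < x ^ 2 + c := by positivity
  have hy : 0 < y ^ 2 + c := by positivity
  have hd : 0 < (1 + |x - y|) ^ 2 := by positivity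
  rw [Real.rpow_mul (by positivity), Real.rpow_two]
  rcases le_or_gt 0 s with hs | hs
  · rw [abs_of_nonneg hs, ← Real.mul_rpow hd.le hy.le]
    exact Real.rpow_le_rpow hx.le (sq_add_le_one_add_abs_sub_sq_mul hc x y) hs
  · rw [abs_of_neg hs, Real.rpow_neg hd.le, ← div_eq_inv_mul, le_div_iff₀ (by positivity),
      ← Real.mul_rpow hx.le hd.le]
    refine Real.rpow_le_rpow_of_nonpos hy ?_ hs.le
    rw [mul_comm, abs_sub_comm]
    exact sq_add_le_one_add_abs_sub_sq_mul hc y x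

theorem summable_one_add_abs_int_rpow_neg_two :
    Summable fun k : ℤ => (1 + |(k : ℝ)|) ^ (-2 : ℝ) := by
  refine (Real.summable_abs_int_rpow one_lt_two).of_norm_bounded_eventually ?_
  filter_upwards [Filter.eventually_cofinite_ne 0] with k hk
  rw [Real.norm_of_nonneg (by positivity)]
  exact Real.rpow_le_rpow_of_nonpos (abs_pos.2 (Int.cast_ne_zero.2 hk)) (by linarith) (by norm_num)

theorem tsum_one_add_abs_int_rpow_neg_two_pos :
    0 < ∑' k : ℤ, (1 + |(k : ℝ)|) ^ (-2 : ℝ) :=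
  summable_one_add_abs_int_rpow_neg_two.tsum_pos (fun _ => by positivity) 0 (by simp)

theorem tsum_ofReal_mul_one_add_abs_int_rpow_neg_two {b : ℝ} (hb : 0 ≤ b) :
    ∑' k : ℤ, ENNReal.ofReal (b * (1 + |(k : ℝ)|) ^ (-2 : ℝ)) =
      ENNReal.ofReal (b * ∑' k : ℤ, (1 + |(k : ℝ)|) ^ (-2 : ℝ)) := by
  rw [← ENNReal.ofReal_tsum_of_nonneg (fun _ => by positivity)
    (summable_one_add_abs_int_rpow_neg_two.mul_left b), tsum_mul_left]

theorem inner_e_left (f : l2Z) (n : ℤ) : @inner ℂ _ _ (e n) f = f n := by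
  classical
  simp [e, lp.inner_single_left, RCLike.inner_apply]

theorem hasSum_matrixEntry_mul (A : l2Z →L[ℂ] l2Z) (u : l2Z) (n : ℤ) :
    HasSum (fun j => matrixEntry A n j * u j) (A u n) := by
  set v := ContinuousLinearMap.adjoint A (e n)
  have hv : ∀ j, conj (v j) = matrixEntry A n j := fun j => by
    rw [← inner_e_left, ContinuousLinearMap.adjoint_inner_right, inner_conj_symm, matrixEntry]
  have hvu : @inner ℂ _ _ v u = A u n := by
    rw [ContinuousLinearMap.adjoint_inner_left, inner_e_left]
  simpa only [← hvu, RCLike.inner_apply, hv, mul_comm] using lp.hasSum_inner (𝕜 := ℂ) v u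

theorem enorm_apply_le_tsum_matrixEntry (A : l2Z →L[ℂ] l2Z) (u : l2Z) (n : ℤ) :
    ‖A u n‖ₑ ≤ ∑' j, ‖matrixEntry A n j‖ₑ * ‖u j‖ₑ :=
  (hasSum_matrixEntry_mul A u n).enorm_le_of_bounded ENNReal.summable.hasSum
    fun _ => (enorm_mul _ _).le

theorem tsum_enorm_apply_sq_mul_le_of_schur (A : l2Z →L[ℂ] l2Z) (W : ℤ → ℝ≥0∞) {α β : ℝ≥0∞}
    (hrow : ∀ i, ∑' j, ‖matrixEntry A i j‖ₑ ≤ α)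
    (hcol : ∀ j, ∑' i, ‖matrixEntry A i j‖ₑ * W i ≤ β * W j) (u : l2Z) :
    ∑' n, ‖A u n‖ₑ ^ 2 * W n ≤ α * β * ∑' n, ‖u n‖ₑ ^ 2 * W n :=
  calc ∑' n, ‖A u n‖ₑ ^ 2 * W n
      ≤ ∑' n, (∑' j, ‖matrixEntry A n j‖ₑ * ‖u j‖ₑ) ^ 2 * W n := by
        gcongr with n; exact enorm_apply_le_tsum_matrixEntry A u n
    _ ≤ α * β * ∑' n, ‖u n‖ₑ ^ 2 * W n := ENNReal.schur_test _ W _ hrow hcol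

namespace RapidDecay

variable {A : l2Z →L[ℂ] l2Z}

theorem exists_norm_mul_weight_le (hA : RapidDecay A) (s : ℝ) :
    ∃ B > 0, ∀ c : ℝ, 1 ≤ c → ∀ i j : ℤ,
      ‖matrixEntry A i j‖ * ((i : ℝ) ^ 2 + c) ^ s ≤
        B * (1 + |((i - j : ℤ) : ℝ)|) ^ (-2 : ℝ) * ((j : ℝ) ^ 2 + c) ^ s := by
  obtain ⟨B, hB, hdecay⟩ := hA (2 * |s| + 2) (by positivity)
  refine ⟨B, hB, fun c hc i j => ?_⟩
  have hd : 0 < 1 + |((i - j : ℤ) : ℝ)| := by positivity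
  have hpeetre := sq_add_rpow_le_one_add_abs_sub_rpow_mul hc s i j
  rw [← Int.cast_sub] at hpeetre
  calc ‖matrixEntry A i j‖ * ((i : ℝ) ^ 2 + c) ^ s
      ≤ B * (1 + |((i - j : ℤ) : ℝ)|) ^ (-(2 * |s| + 2)) *
          ((1 + |((i - j : ℤ) : ℝ)|) ^ (2 * |s|) * ((j : ℝ) ^ 2 + c) ^ s) :=
        mul_le_mul (hdecay i j) hpeetre (by positivity) (by positivity)
    _ = B * (1 + |((i - j : ℤ) : ℝ)|) ^ (-2 : ℝ) * ((j : ℝ) ^ 2 + c) ^ s := by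
        rw [← mul_assoc, mul_assoc B, ← Real.rpow_add hd]
        ring_nf

theorem exists_tsum_enorm_matrixEntry_le (hA : RapidDecay A) :
    ∃ α > 0, ∀ i, ∑' j, ‖matrixEntry A i j‖ₑ ≤ ENNReal.ofReal α := by
  obtain ⟨B, hB, hbound⟩ := hA.exists_norm_mul_weight_le 0
  refine ⟨_, mul_pos hB tsum_one_add_abs_int_rpow_neg_two_pos, fun i =>
    (ENNReal.tsum_le_tsum_of_le_sub (K := fun i j => ‖matrixEntry A i j‖ₑ) _ (fun i j => ?_)
      i).trans_eq (tsum_ofReal_mul_one_add_abs_int_rpow_neg_two hB.le)⟩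
  simpa only [Real.rpow_zero, mul_one, ofReal_norm] using
    ENNReal.ofReal_le_ofReal (hbound 1 le_rfl i j)

theorem exists_tsum_enorm_matrixEntry_mul_weight_le (hA : RapidDecay A) (s : ℝ) :
    ∃ β > 0, ∀ c : ℝ, 1 ≤ c → ∀ j : ℤ,
      ∑' i : ℤ, ‖matrixEntry A i j‖ₑ * ENNReal.ofReal (((i : ℝ) ^ 2 + c) ^ s) ≤
        ENNReal.ofReal β * ENNReal.ofReal (((j : ℝ) ^ 2 + c) ^ s) := by
  obtain ⟨B, hB, hbound⟩ := hA.exists_norm_mul_weight_le s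
  refine ⟨_, mul_pos hB tsum_one_add_abs_int_rpow_neg_two_pos, fun c hc j =>
    (ENNReal.tsum_mul_le_tsum_mul_of_mul_le_sub (K := fun i j => ‖matrixEntry A i j‖ₑ) _
      (fun i j => ?_) j).trans_eq (by rw [tsum_ofReal_mul_one_add_abs_int_rpow_neg_two hB.le])⟩
  rw [← ofReal_norm, ← ENNReal.ofReal_mul (norm_nonneg _), ← ENNReal.ofReal_mul (by positivity)]
  exact ENNReal.ofReal_le_ofReal (hbound c hc i j)

end RapidDecay

/-- an operator `A` on `ℓ²(ℤ)` with rapidly decaying matrix entries is,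
for every `s ∈ ℝ`, bounded on the weighted space `ℓ²(ℤ, μ_{s,R})`,
`μ_{s,R}(n) = (n²+R²)^s`, with operator norm bounded uniformly in `R ≥ 1`
(`A` is an operator family of order `0`). -/
theorem rapid_decay_bounded_on_weighted_l2
    (A : l2Z →L[ℂ] l2Z) (hA : RapidDecay A) (s : ℝ) :
    ∃ C : ℝ, 0 < C ∧ ∀ R : ℝ, 1 ≤ R → ∀ u : l2Z,
      Summable (fun n : ℤ => ‖u n‖ ^ 2 * ((n : ℝ) ^ 2 + R ^ 2) ^ s) →
      Summable (fun n : ℤ => ‖(A u) n‖ ^ 2 * ((n : ℝ) ^ 2 + R ^ 2) ^ s) ∧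
      ∑' n : ℤ, ‖(A u) n‖ ^ 2 * ((n : ℝ) ^ 2 + R ^ 2) ^ s ≤
        C * ∑' n : ℤ, ‖u n‖ ^ 2 * ((n : ℝ) ^ 2 + R ^ 2) ^ s := by
  obtain ⟨α, hα, hrow⟩ := hA.exists_tsum_enorm_matrixEntry_le
  obtain ⟨β, hβ, hcol⟩ := hA.exists_tsum_enorm_matrixEntry_mul_weight_le s
  refine ⟨α * β, by positivity, fun R hR u hu => ?_⟩
  have henorm : ∀ v : l2Z, ∑' n : ℤ, ENNReal.ofReal (‖v n‖ ^ 2 * ((n : ℝ) ^ 2 + R ^ 2) ^ s) =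
      ∑' n : ℤ, ‖v n‖ₑ ^ 2 * ENNReal.ofReal (((n : ℝ) ^ 2 + R ^ 2) ^ s) := fun v =>
    tsum_congr fun n => by
      rw [ENNReal.ofReal_mul (by positivity), ENNReal.ofReal_pow (norm_nonneg _), ofReal_norm]
  refine summable_and_tsum_le_of_tsum_ofReal_le (fun n => by positivity) (fun n => by positivity)
    hu (by positivity) ?_
  rw [henorm, henorm, ENNReal.ofReal_mul hα.le]
  exact tsum_enorm_apply_sq_mul_le_of_schur A _ hrow (hcol _ (one_le_pow₀ hR)) u
end
end
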